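/- Let μ be a measure on S × S, where S := AddCircle ℝ 1. For a, b ∈ S put Link(a,b) := {(c,d) ∈ S × S : (sbtw a c b ∧ sbtw b d a) ∨ (sbtw a d b ∧ sbtw b c a)}, and call the pair (a,b) μ-short if μ(Link(a,b)) = 0. Let n ≥ 1 and let x₀, x₁, …, xₙ ∈ S be in strict circular order (sbtw xᵢ xⱼ xₖ whenever i < j < k). Assume that (xᵢ, xᵢ₊₁) is μ-short for every 0 ≤ i < n, and that μ gives zero mass to the pencil at each intermediate vertex: μ({xᵢ} × S) = 0 and μ(S × {xᵢ}) = 0 for every 0 < i < n. Then (x₀, xₙ) is μ-short. -/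

import Mathlib

/-!
A pair `(c, d)` linking `(x₀, xₙ)` has one endpoint on the arc from `x₀` to `xₙ` and the other
on the complementary arc from `xₙ` to `x₀`, which lies inside the complementary arc of every side
`(xᵢ, xᵢ₊₁)`. The first endpoint is either an intermediate vertex `xᵢ`, so the pair lies in a
null pencil, or lies strictly inside the arc of some side, so the pair links that short side.
Hence `Link(x₀, xₙ)` is covered by finitely many null sets.
-/

theorem Real.fact_zero_lt_one : Fact ((0 : ℝ) < 1) :=
  ⟨one_pos⟩

attribute [local instance] Real.fact_zero_lt_one

open MeasureTheory

noncomputable section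

/-- The circle ℝ/ℤ. -/
abbrev Circle' : Type := AddCircle (1 : ℝ)

/-- The set of ordered pairs `(c,d)` linking the pair `(a,b)`: such pairs are the
endpoints of geodesics transversally intersecting the geodesic with endpoints `a, b`. -/
def linkSet (a b : Circle') : Set (Circle' × Circle') :=
  {p | (sbtw a p.1 b ∧ sbtw b p.2 a) ∨ (sbtw a p.2 b ∧ sbtw b p.1 a)}

section CircularOrder

variable {α : Type*} [CircularOrder α]

theorem Btw.btw.sbtw_of_ne {a b c : α} (h : btw a b c) (hab : a ≠ b) (hbc : b ≠ c)
    (hca : c ≠ a) : sbtw a b c :=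
  sbtw_of_btw_not_btw h fun h' => by rcases h.antisymm h' with h | h | h <;> contradiction

theorem SBtw.sbtw.eq_or_sbtw_or_sbtw {a b c m : α} (hc : sbtw a c b) (hm : sbtw a m b) :
    c = m ∨ sbtw a c m ∨ sbtw m c b := by
  by_contra! ⟨hcm, hacm, hmcb⟩
  have hac : a ≠ c := by rintro rfl; exact sbtw_irrefl_left hc
  have hcb : c ≠ b := by rintro rfl; exact sbtw_irrefl_right hc
  have ham : a ≠ m := by rintro rfl; exact sbtw_irrefl_left hm
  have hmb : m ≠ b := by rintro rfl; exact sbtw_irrefl_right hm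
  have hmca : sbtw m c a := (btw_iff_not_sbtw.2 hacm).sbtw_of_ne hcm.symm hac.symm ham
  have hbcm : sbtw b c m := (btw_iff_not_sbtw.2 hmcb).sbtw_of_ne hcb.symm hcm hmb
  exact sbtw_asymm hc.cyclic_right (sbtw_trans_right hmca.cyclic_left hbcm.cyclic_left)

variable {n : ℕ} {x : Fin (n + 1) → α}

theorem mem_Ioo_zero_last_of_sbtw {i : Fin (n + 1)} (h : sbtw (x 0) (x i) (x (Fin.last n))) :
    i ∈ Set.Ioo 0 (Fin.last n) :=
  ⟨Fin.pos_of_ne_zero (by rintro rfl; exact sbtw_irrefl_left h),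
    Fin.lt_last_iff_ne_last.2 (by rintro rfl; exact sbtw_irrefl_right h)⟩

theorem exists_eq_or_sbtw_side_of_sbtw_zero_last
    (hx : ∀ i j k : Fin (n + 1), i < j → j < k → sbtw (x i) (x j) (x k)) {z : α}
    (hz : sbtw (x 0) z (x (Fin.last n))) :
    (∃ i, z = x i) ∨ ∃ i : Fin n, sbtw (x i.castSucc) z (x i.succ) := by
  induction n with
  | zero => exact absurd hz sbtw_irrefl_left_right
  | succ n ih =>
    rcases n.eq_zero_or_pos with rfl | hn
    · exact Or.inr ⟨0, hz⟩
    have hm : sbtw (x 0) (x (Fin.last n).castSucc) (x (Fin.last (n + 1))) :=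
      hx _ _ _ (by simpa [Fin.lt_def] using hn) (Fin.castSucc_lt_last _)
    rcases hz.eq_or_sbtw_or_sbtw hm with h | h | h
    · exact Or.inl ⟨_, h⟩
    · rcases ih (x := x ∘ Fin.castSucc) (fun i j k hij hjk => hx _ _ _ hij hjk) h with
        ⟨i, rfl⟩ | ⟨i, hi⟩
      · exact Or.inl ⟨_, rfl⟩
      · exact Or.inr ⟨i.castSucc, by simpa using hi⟩
    · exact Or.inr ⟨Fin.last n, h⟩

theorem sbtw_succ_castSucc_of_sbtw_last_zero
    (hx : ∀ i j k : Fin (n + 1), i < j → j < k → sbtw (x i) (x j) (x k)) {z : α}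
    (hz : sbtw (x (Fin.last n)) z (x 0)) (i : Fin n) :
    sbtw (x i.succ) z (x i.castSucc) := by
  have hz' : sbtw (x i.succ) z (x 0) := by
    rcases (Fin.le_last i.succ).eq_or_lt with h | h
    · rwa [h]
    · exact (hx _ _ _ i.succ_pos h).cyclic_left.trans_left hz
  rcases (Fin.zero_le i.castSucc).eq_or_lt with h | h
  · rwa [← h]
  · exact sbtw_trans_right hz' (hx _ _ _ h Fin.castSucc_lt_succ).cyclic_right

end CircularOrder

theorem linkSet_subset_sides_union_pencils {n : ℕ} {x : Fin (n + 1) → Circle'}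
    (hx : ∀ i j k : Fin (n + 1), i < j → j < k → sbtw (x i) (x j) (x k)) :
    linkSet (x 0) (x (Fin.last n)) ⊆
      (⋃ i : Fin n, linkSet (x i.castSucc) (x i.succ)) ∪
        ⋃ i ∈ Set.Ioo 0 (Fin.last n), {x i} ×ˢ Set.univ ∪ Set.univ ×ˢ {x i} := by
  rintro ⟨c, d⟩ (⟨hc, hd⟩ | ⟨hd, hc⟩)
  · rcases exists_eq_or_sbtw_side_of_sbtw_zero_last hx hc with ⟨i, rfl⟩ | ⟨i, hi⟩
    · exact Or.inr (Set.mem_biUnion (mem_Ioo_zero_last_of_sbtw hc) (Or.inl ⟨rfl, trivial⟩))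
    · exact Or.inl (Set.mem_iUnion.2
        ⟨i, Or.inl ⟨hi, sbtw_succ_castSucc_of_sbtw_last_zero hx hd i⟩⟩)
  · rcases exists_eq_or_sbtw_side_of_sbtw_zero_last hx hd with ⟨i, rfl⟩ | ⟨i, hi⟩
    · exact Or.inr (Set.mem_biUnion (mem_Ioo_zero_last_of_sbtw hd) (Or.inr ⟨trivial, rfl⟩))
    · exact Or.inl (Set.mem_iUnion.2
        ⟨i, Or.inr ⟨hi, sbtw_succ_castSucc_of_sbtw_last_zero hx hc i⟩⟩)

theorem diagonal_of_short_polygon_is_short_general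
    (μ : Measure (Circle' × Circle')) (n : ℕ)
    (x : Fin (n + 1) → Circle')
    (horder : ∀ i j k : Fin (n + 1), i < j → j < k → sbtw (x i) (x j) (x k))
    (hshort : ∀ i : Fin n, μ (linkSet (x i.castSucc) (x i.succ)) = 0)
    (hpencil : ∀ i : Fin (n + 1), 0 < i → i < Fin.last n →
      μ ({x i} ×ˢ (Set.univ : Set Circle')) = 0 ∧
      μ ((Set.univ : Set Circle') ×ˢ {x i}) = 0) :
    μ (linkSet (x 0) (x (Fin.last n))) = 0 := by
  refine measure_mono_null (linkSet_subset_sides_union_pencils horder)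
    (measure_union_null (measure_iUnion_null hshort) ?_)
  refine (measure_biUnion_null_iff (Set.to_countable _)).2 fun i hi => ?_
  exact measure_union_null (hpencil i hi.1 hi.2).1 (hpencil i hi.1 hi.2).2

theorem diagonal_of_short_polygon_is_short
    (μ : Measure (Circle' × Circle')) (n : ℕ) (hn : 1 ≤ n)
    (x : Fin (n + 1) → Circle')
    (horder : ∀ i j k : Fin (n + 1), i < j → j < k → sbtw (x i) (x j) (x k))
    (hshort : ∀ i : Fin n, μ (linkSet (x i.castSucc) (x i.succ)) = 0)
    (hpencil : ∀ i : Fin (n + 1), 0 < i → i < Fin.last n →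
      μ ({x i} ×ˢ (Set.univ : Set Circle')) = 0 ∧
      μ ((Set.univ : Set Circle') ×ˢ {x i}) = 0) :
    μ (linkSet (x 0) (x (Fin.last n))) = 0 :=
  diagonal_of_short_polygon_is_short_general μ n x horder hshort hpencil
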